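/- Let Q be the quadratic form x ↦ x² on ℝ (viewed as a module over itself). The submonoid of CliffordAlgebra Q generated by the set {ι(v) : v ∈ ℝ, Q(v) = 1} (that is, generated by ι(1) and ι(−1)) is isomorphic, as a monoid, to the Klein four-group Multiplicative (ZMod 2 × ZMod 2). (This is the paper's claim that the positive Pin group in dimension one satisfies Pin⁺₁ ≅ ℤ/2 × ℤ/2.) -/

import Mathlib

open CliffordAlgebra

/-- The quadratic form `x ↦ x²` on `ℝ`. -/
noncomputable def sqForm : QuadraticForm ℝ ℝ := QuadraticMap.sq

/-!
With `e = ι 1` we have `e ^ 2 = 1`, and the vectors of square one are `±1`, so the generators are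
`±e`. Since `-1 = e * (-e)`, the submonoid they generate is `{±1, ±e}`, the image of
`(a, b) ↦ (-1) ^ a * e ^ b` on `ℤ/2 × ℤ/2`. That map is injective because the algebra map to
`ℝ × ℝ` sending `ι v` to `(v, -v)` separates `1`, `-1` and `±e`.
-/

theorem pow_zmod_val_add {M : Type*} [Monoid M] {n : ℕ} [NeZero n] {x : M} (hx : x ^ n = 1)
    (a b : ZMod n) : x ^ (a + b).val = x ^ a.val * x ^ b.val := by
  rw [ZMod.val_add, ← pow_eq_pow_mod _ hx, pow_add]

section KleinFour

variable {A : Type*} [Ring A]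

def kleinFourHom (e : A) (he : e ^ 2 = 1) : Multiplicative (ZMod 2 × ZMod 2) →* A where
  toFun p := (-1) ^ p.toAdd.1.val * e ^ p.toAdd.2.val
  map_one' := by simp
  map_mul' p q := by
    simp only [toAdd_mul, Prod.fst_add, Prod.snd_add, pow_zmod_val_add he,
      pow_zmod_val_add (neg_one_sq (R := A)), mul_assoc,
      ((Commute.neg_one_left (e ^ p.toAdd.2.val)).pow_left _).left_comm]

theorem kleinFourHom_apply (e : A) (he : e ^ 2 = 1) (a b : ZMod 2) :
    kleinFourHom e he (.ofAdd (a, b)) = (-1) ^ a.val * e ^ b.val := rfl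

theorem kleinFourHom_injective {e : A} (he : e ^ 2 = 1) (he_one : e ≠ 1) (he_neg_one : e ≠ -1)
    (h_neg_one : (-1 : A) ≠ 1) : Function.Injective (kleinFourHom e he) := by
  rw [injective_iff_map_eq_one]
  intro p h
  obtain ⟨⟨a, b⟩, rfl⟩ := Multiplicative.ofAdd.surjective p
  rw [kleinFourHom_apply] at h
  have hZ2 : ∀ x : ZMod 2, x = 0 ∨ x = 1 := by decide
  rcases hZ2 a with rfl | rfl <;> rcases hZ2 b with rfl | rfl <;>
    simp_all [ZMod.val_one, neg_eq_iff_eq_neg]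

theorem mrange_kleinFourHom (e : A) (he : e ^ 2 = 1) :
    MonoidHom.mrange (kleinFourHom e he) = Submonoid.closure {e, -e} := by
  apply le_antisymm
  · rintro _ ⟨p, rfl⟩
    have he_mem : e ∈ Submonoid.closure {e, -e} := Submonoid.subset_closure (by simp)
    have hneg_mem : -e ∈ Submonoid.closure {e, -e} := Submonoid.subset_closure (by simp)
    have hneg_one_mem : (-1 : A) ∈ Submonoid.closure {e, -e} := by
      simpa [← pow_two, he] using Submonoid.mul_mem _ he_mem hneg_mem
    exact Submonoid.mul_mem _ (Submonoid.pow_mem _ hneg_one_mem _) (Submonoid.pow_mem _ he_mem _)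
  · rw [Submonoid.closure_le, Set.insert_subset_iff, Set.singleton_subset_iff]
    exact ⟨⟨.ofAdd (0, 1), by simp [kleinFourHom_apply, ZMod.val_one]⟩,
      ⟨.ofAdd (1, 1), by simp [kleinFourHom_apply, ZMod.val_one]⟩⟩

end KleinFour

theorem sqForm_apply (v : ℝ) : sqForm v = v * v := by simp [sqForm]

theorem ι_sqForm_one_sq : ι sqForm 1 ^ 2 = 1 := by
  rw [pow_two, ι_sq_scalar, sqForm_apply, mul_one, map_one]

theorem setOf_ι_sqForm_eq_one :
    {x : CliffordAlgebra sqForm | ∃ v : ℝ, sqForm v = 1 ∧ ι sqForm v = x} =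
      {ι sqForm 1, -ι sqForm 1} := by
  ext x
  simp only [sqForm_apply, mul_self_eq_one_iff, Set.mem_ofPred_eq, Set.mem_insert_iff,
    Set.mem_singleton_iff]
  constructor
  · rintro ⟨v, rfl | rfl, rfl⟩ <;> simp
  · rintro (rfl | rfl)
    exacts [⟨1, by simp⟩, ⟨-1, by simp⟩]

noncomputable def sqFormToProd : CliffordAlgebra sqForm →ₐ[ℝ] ℝ × ℝ :=
  lift sqForm ⟨LinearMap.id.prod (-LinearMap.id), fun v => by ext <;> simp [sqForm_apply]⟩

theorem sqFormToProd_ι (v : ℝ) : sqFormToProd (ι sqForm v) = (v, -v) := by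
  rw [sqFormToProd, lift_ι_apply]
  rfl

theorem kleinFourHom_ι_sqForm_injective :
    Function.Injective (kleinFourHom (ι sqForm 1) ι_sqForm_one_sq) := by
  refine kleinFourHom_injective _ ?_ ?_ ?_ <;> intro h <;> replace h := congrArg sqFormToProd h <;>
    norm_num [sqFormToProd_ι, Prod.ext_iff] at h

/-- For the quadratic form `Q(x) = x²` on `ℝ`, the submonoid of the Clifford
algebra of `Q` generated by `{ι v : Q v = 1}` (i.e. by `ι 1` and `ι (-1)`) is isomorphic, as a
monoid, to the Klein four-group `ℤ/2 × ℤ/2`; this is the claim `Pin⁺₁ ≅ ℤ/2 × ℤ/2`. -/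
theorem pinPlus_one_iso_kleinFour :
    Nonempty
      ((Submonoid.closure
          {x : CliffordAlgebra sqForm | ∃ v : ℝ, sqForm v = 1 ∧ ι sqForm v = x}) ≃*
        Multiplicative (ZMod 2 × ZMod 2)) := by
  rw [setOf_ι_sqForm_eq_one, ← mrange_kleinFourHom _ ι_sqForm_one_sq]
  exact ⟨(MulEquiv.ofLeftInverse' _
    (Function.leftInverse_invFun kleinFourHom_ι_sqForm_injective)).symm⟩
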